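/- For all x ≥ 0, α > 0, β_n ≥ 1, φ, ψ ≥ 0: RL_n^{[α]}(t²; x) = (1 + 3φ + 3φ² + 6xβ_n + 6xφβ_n + 3αxβ_n² + 3x²β_n²) / (3(ψ + β_n)²). -/

import Mathlib

/-!
With `r = x / α` and `z = α β / (1 + α β)`, the weight of the `i`-th cell is the negative
binomial probability `p_i = (1 - z) ^ r * (r)_i / i! * z ^ i`, where `(r)_i` is the rising
factorial. The binomial series `(1 - z) ^ (-r) = ∑ (r)_i / i! * z ^ i` gives `∑ p_i = 1`, and
the shift `(i + 1) (r)_(i+1) / (i+1)! = r (r+1)_i / i!` turns it into the factorial moments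
`∑ i p_i = β x` and `∑ i (i - 1) p_i = β² x (x + α)`. Since `β` times the integral of the
square over `[i / β, (i + 1) / β]` is `((i + 1 + φ)³ - (i + φ)³) / (3 (β + ψ)²)`, a quadratic
in `i`, the series is a combination of these three moments.
-/

open intervalIntegral Finset

noncomputable def negBinomialCoeff (r : ℝ) (n : ℕ) : ℝ :=
  (∏ j ∈ range n, (r + j)) / n.factorial

lemma negBinomialCoeff_eq_choose (r : ℝ) (n : ℕ) :
    negBinomialCoeff r n = Ring.choose (r + n - 1) n := by
  rw [Ring.choose_eq_smul, Polynomial.descPochhammer_smeval_eq_ascPochhammer,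
    Polynomial.ascPochhammer_smeval_cast, Polynomial.ascPochhammer_smeval_eq_eval,
    negBinomialCoeff, smul_eq_mul, div_eq_inv_mul, show r + n - 1 - n + 1 = r by ring]
  congr 1
  induction n with
  | zero => simp
  | succ n ih => rw [prod_range_succ, ascPochhammer_succ_eval, ih]

lemma succ_mul_negBinomialCoeff_succ (r : ℝ) (n : ℕ) :
    (n + 1) * negBinomialCoeff r (n + 1) = r * negBinomialCoeff (r + 1) n := by
  rw [negBinomialCoeff, negBinomialCoeff, prod_range_succ', Nat.factorial_succ]
  push_cast
  simp_rw [add_assoc, add_comm (1 : ℝ)]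
  field_simp
  ring

lemma hasSum_negBinomialCoeff_mul_pow (r : ℝ) {z : ℝ} (hz : |z| < 1) :
    HasSum (fun n => negBinomialCoeff r n * z ^ n) ((1 - z) ^ (-r)) := by
  have h := (Real.one_div_one_sub_rpow_hasFPowerSeriesOnBall_zero r).hasSum
    (y := z) (by simpa [Metric.mem_eball, edist_dist, ENNReal.ofReal_lt_one] using hz)
  simp only [FormalMultilinearSeries.ofScalars_apply_eq, zero_add, smul_eq_mul] at h
  simpa [negBinomialCoeff_eq_choose, Real.rpow_neg (sub_nonneg.2 (abs_lt.1 hz).2.le)] using h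

lemma hasSum_mul_negBinomialCoeff_mul_pow (r : ℝ) {z : ℝ} (hz : |z| < 1) :
    HasSum (fun n : ℕ => n * (negBinomialCoeff r n * z ^ n)) (r * z * (1 - z) ^ (-(r + 1))) := by
  refine (hasSum_nat_add_iff' 1).1 ?_
  rw [sum_range_one, Nat.cast_zero, zero_mul, sub_zero]
  refine ((hasSum_negBinomialCoeff_mul_pow (r + 1) hz).mul_left (r * z)).congr_fun fun n => ?_
  push_cast
  linear_combination z ^ (n + 1) * succ_mul_negBinomialCoeff_succ r n

lemma hasSum_mul_sub_one_mul_negBinomialCoeff_mul_pow (r : ℝ) {z : ℝ} (hz : |z| < 1) :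
    HasSum (fun n : ℕ => n * (n - 1) * (negBinomialCoeff r n * z ^ n))
      (r * (r + 1) * z ^ 2 * (1 - z) ^ (-(r + 2))) := by
  refine (hasSum_nat_add_iff' 1).1 ?_
  rw [sum_range_one, Nat.cast_zero, zero_mul, zero_mul, sub_zero,
    show r * (r + 1) * z ^ 2 * (1 - z) ^ (-(r + 2)) =
      r * z * ((r + 1) * z * (1 - z) ^ (-(r + 1 + 1))) by ring_nf]
  refine ((hasSum_mul_negBinomialCoeff_mul_pow (r + 1) hz).mul_left (r * z)).congr_fun fun n => ?_
  push_cast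
  linear_combination (n * z ^ (n + 1)) * succ_mul_negBinomialCoeff_succ r n

noncomputable def polyaWeight (x α β : ℝ) (i : ℕ) : ℝ :=
  (1 + β * α) ^ (-x / α) * ((α + 1 / β) ^ i)⁻¹ *
    ((∏ j ∈ range i, (x + (j : ℝ) * α)) / (i.factorial : ℝ))

lemma abs_div_one_add_lt_one {t : ℝ} (ht : 0 ≤ t) : |t / (1 + t)| < 1 := by
  rw [abs_of_nonneg (by positivity), div_lt_one (by positivity)]
  linarith

lemma one_sub_div_one_add {t : ℝ} (ht : 1 + t ≠ 0) : 1 - t / (1 + t) = (1 + t)⁻¹ := by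
  field_simp
  ring

section PolyaWeight

variable (x : ℝ) {α β : ℝ} (hα : 0 < α) (hβ : 0 < β)
include hα hβ

lemma polyaWeight_eq (i : ℕ) :
    polyaWeight x α β i = (1 + α * β) ^ (-(x / α)) *
      (negBinomialCoeff (x / α) i * (α * β / (1 + α * β)) ^ i) := by
  have hprod : ∏ j ∈ range i, (x + (j : ℝ) * α) = α ^ i * ∏ j ∈ range i, (x / α + j) := by
    rw [← card_range i, ← prod_const, card_range, ← prod_mul_distrib]
    exact prod_congr rfl fun j _ => by field_simp
  have hbase : α + 1 / β = (1 + α * β) / β := by field_simp; ring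
  rw [polyaWeight, negBinomialCoeff, hprod, hbase, mul_comm β α, neg_div, ← inv_pow, inv_div]
  ring

lemma hasSum_mul_polyaWeight_of_hasSum {f : ℕ → ℝ} {s : ℝ}
    (h : HasSum (fun n => f n * (negBinomialCoeff (x / α) n * (α * β / (1 + α * β)) ^ n)) s) :
    HasSum (fun i => f i * polyaWeight x α β i) ((1 + α * β) ^ (-(x / α)) * s) :=
  (h.mul_left _).congr_fun fun i => by rw [polyaWeight_eq x hα hβ]; ring

lemma rpow_neg_mul_one_sub_rpow_neg (k : ℕ) :
    (1 + α * β) ^ (-(x / α)) * (1 - α * β / (1 + α * β)) ^ (-(x / α + k)) = (1 + α * β) ^ k := by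
  have ha : 0 < 1 + α * β := by positivity
  rw [one_sub_div_one_add ha.ne', Real.inv_rpow ha.le, Real.rpow_neg ha.le,
    Real.rpow_neg ha.le, inv_inv, Real.rpow_add ha, Real.rpow_natCast,
    inv_mul_cancel_left₀ (Real.rpow_pos_of_pos ha _).ne']

theorem hasSum_polyaWeight : HasSum (polyaWeight x α β) 1 := by
  have h := hasSum_mul_polyaWeight_of_hasSum x hα hβ (f := 1)
    (by simpa using
      hasSum_negBinomialCoeff_mul_pow (x / α) (abs_div_one_add_lt_one (by positivity)))
  have hval := rpow_neg_mul_one_sub_rpow_neg x hα hβ 0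
  rw [Nat.cast_zero, add_zero, pow_zero] at hval
  simpa [hval] using h

theorem hasSum_mul_polyaWeight : HasSum (fun i : ℕ => i * polyaWeight x α β i) (β * x) := by
  have h := hasSum_mul_polyaWeight_of_hasSum x hα hβ
    (hasSum_mul_negBinomialCoeff_mul_pow (x / α) (abs_div_one_add_lt_one (by positivity)))
  have hval := rpow_neg_mul_one_sub_rpow_neg x hα hβ 1
  rw [Nat.cast_one, pow_one] at hval
  convert h using 1
  rw [mul_left_comm, hval]
  field_simp

theorem hasSum_mul_sub_one_mul_polyaWeight :
    HasSum (fun i : ℕ => i * (i - 1) * polyaWeight x α β i) (β ^ 2 * x * (x + α)) := by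
  have h := hasSum_mul_polyaWeight_of_hasSum x hα hβ
    (hasSum_mul_sub_one_mul_negBinomialCoeff_mul_pow (x / α)
      (abs_div_one_add_lt_one (by positivity)))
  have hval := rpow_neg_mul_one_sub_rpow_neg x hα hβ 2
  rw [Nat.cast_two] at hval
  convert h using 1
  rw [mul_left_comm, hval]
  field_simp

end PolyaWeight

lemma mul_integral_sq (β φ ψ c : ℝ) (hβ : β ≠ 0) :
    β * ∫ u in c / β..(c + 1) / β, ((β * u + φ) / (β + ψ)) ^ 2
      = ((c + 1 + φ) ^ 3 - (c + φ) ^ 3) / (3 * (β + ψ) ^ 2) := by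
  simp_rw [div_pow, integral_div]
  rw [integral_comp_mul_add (fun t => t ^ 2) hβ, integral_pow, smul_eq_mul]
  field_simp
  ring

theorem stmt_2_general (x α β φ ψ : ℝ) (hα : 0 < α) (hβ : 1 ≤ β) :
    β * ∑' i : ℕ,
      (1 + β * α) ^ (-x / α) * ((α + 1 / β) ^ i)⁻¹ *
        ((∏ j ∈ Finset.range i, (x + (j : ℝ) * α)) / (i.factorial : ℝ)) *
        (∫ u in ((i : ℝ) / β)..(((i : ℝ) + 1) / β), ((β * u + φ) / (β + ψ)) ^ 2)
      = (1 + 3 * φ + 3 * φ ^ 2 + 6 * x * β + 6 * x * φ * β + 3 * α * x * β ^ 2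
          + 3 * x ^ 2 * β ^ 2) / (3 * (ψ + β) ^ 2) := by
  have hβ0 : 0 < β := by linarith
  have hsum := ((((hasSum_mul_sub_one_mul_polyaWeight x hα hβ0).mul_left 3).add
    ((hasSum_mul_polyaWeight x hα hβ0).mul_left (6 * φ + 6))).add
    ((hasSum_polyaWeight x hα hβ0).mul_left (3 * φ ^ 2 + 3 * φ + 1))).div_const
    (3 * (β + ψ) ^ 2)
  have hterm (i : ℕ) : β * (polyaWeight x α β i *
      ∫ u in ((i : ℝ) / β)..(((i : ℝ) + 1) / β), ((β * u + φ) / (β + ψ)) ^ 2) =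
      (3 * (i * (i - 1) * polyaWeight x α β i) + (6 * φ + 6) * (i * polyaWeight x α β i) +
        (3 * φ ^ 2 + 3 * φ + 1) * polyaWeight x α β i) / (3 * (β + ψ) ^ 2) := by
    rw [mul_left_comm, mul_integral_sq β φ ψ _ hβ0.ne']
    ring
  change β * ∑' i : ℕ, polyaWeight x α β i * _ = _
  rw [← tsum_mul_left, tsum_congr hterm, hsum.tsum_eq]
  ring

/-- Second moment: `RL_n^{[α]}(t²;x)`. -/
theorem stmt_2 (x α β φ ψ : ℝ) (hx : 0 ≤ x) (hα : 0 < α) (hβ : 1 ≤ β)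
    (hφ : 0 ≤ φ) (hψ : 0 ≤ ψ) :
    β * ∑' i : ℕ,
      (1 + β * α) ^ (-x / α) * ((α + 1 / β) ^ i)⁻¹ *
        ((∏ j ∈ Finset.range i, (x + (j : ℝ) * α)) / (i.factorial : ℝ)) *
        (∫ u in ((i : ℝ) / β)..(((i : ℝ) + 1) / β), ((β * u + φ) / (β + ψ)) ^ 2)
      = (1 + 3 * φ + 3 * φ ^ 2 + 6 * x * β + 6 * x * φ * β + 3 * α * x * β ^ 2
          + 3 * x ^ 2 * β ^ 2) / (3 * (ψ + β) ^ 2) :=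
  stmt_2_general x α β φ ψ hα hβ
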